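/- arXiv:2411.12333 — 2 statements merged into one kernel-verified Lean document; each statement's English description precedes it below -/
import Mathlib

section
/- Let V be a commutative, unital, affine quantale, d a V-pseudometric on a set X, and Y ⊆ X with inclusion i : Y ↪ X. For every morphism of V-pseudometrics g : d∘(i×i) → d_e, the map f : X → V defined by f(x) = ⋁{ g(u) ⊗ d(x,u) | u ∈ Y } is a morphism of V-pseudometrics f : d → d_e satisfying g = f ∘ i, and f is the least such morphism: any morphism f' : d → d_e with g = f' ∘ i satisfies f ≤ f' pointwise. -/
universe u

/-- A commutative, unital, affine quantale: a complete lattice with a commutative,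
associative tensor distributing over arbitrary joins, whose unit is the top element. -/
class AffineQuantale (V : Type u) extends CompleteLattice V where
  tensor : V → V → V
  tensor_comm : ∀ x y : V, tensor x y = tensor y x
  tensor_assoc : ∀ x y z : V, tensor (tensor x y) z = tensor x (tensor y z)
  tensor_top : ∀ x : V, tensor x ⊤ = x
  tensor_sSup : ∀ (x : V) (S : Set V), tensor x (sSup S) = ⨆ y ∈ S, tensor x y

namespace AffineQuantale

variable {V : Type u} [AffineQuantale V]

/-- The internal hom `[y,z] = ⋁ {x | x ⊗ y ≤ z}`. -/
def hom (y z : V) : V := sSup {x : V | tensor x y ≤ z}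

/-- The Euclidean pseudometric `d_e(x,y) = [x,y] ⊓ [y,x]`. -/
def de (x y : V) : V := hom x y ⊓ hom y x

end AffineQuantale

/-- A `Set` endofunctor. -/
structure SetFunctor : Type (u + 1) where
  obj : Type u → Type u
  map : ∀ {X Y : Type u}, (X → Y) → obj X → obj Y
  map_id : ∀ {X : Type u} (t : obj X), map (fun x => x) t = t
  map_comp : ∀ {X Y Z : Type u} (f : X → Y) (g : Y → Z) (t : obj X),
    map (fun x => g (f x)) t = map g (map f t)

namespace SetFunctor

open AffineQuantale

/-- Preservation of weak pullbacks. -/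
def PreservesWeakPullbacks (F : SetFunctor.{u}) : Prop :=
  ∀ {X Y Z : Type u} (f : X → Z) (g : Y → Z) (a : F.obj X) (b : F.obj Y),
    F.map f a = F.map g b →
    ∃ c : F.obj {p : X × Y // f p.1 = g p.2},
      F.map (fun p => p.1.1) c = a ∧ F.map (fun p => p.1.2) c = b

variable {V : Type u} [AffineQuantale V]

/-- A `V`-pseudometric: reflexive, symmetric, transitive map `X × X → V`. -/
def IsPMet {X : Type u} (d : X → X → V) : Prop :=
  (∀ x, d x x = ⊤) ∧ (∀ x y, d x y = d y x) ∧
    ∀ x y z, tensor (d x z) (d z y) ≤ d x y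

/-- A morphism of `V`-pseudometrics. -/
def IsMor {X Y : Type u} (dX : X → X → V) (dY : Y → Y → V) (f : X → Y) : Prop :=
  ∀ x y, dX x y ≤ dY (f x) (f y)

/-- A well-behaved modality `τ : F V → V`. -/
def WellBehaved (F : SetFunctor.{u}) (τ : F.obj V → V) : Prop :=
  (∀ {X : Type u} (p q : X → V), (∀ x, p x ≤ q x) →
      ∀ t : F.obj X, τ (F.map p t) ≤ τ (F.map q t)) ∧
  (∀ {X : Type u} (p q : X → V) (t : F.obj X),
      tensor (τ (F.map p t)) (τ (F.map q t))
        ≤ τ (F.map (fun x => tensor (p x) (q x)) t)) ∧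
  Set.range (F.map (fun x : ({⊤} : Set V) => (x : V))) = {t | τ t = ⊤}

/-- The set of couplings of `t₁` and `t₂`. -/
def couplings (F : SetFunctor.{u}) {X : Type u} (t₁ t₂ : F.obj X) :
    Set (F.obj (X × X)) :=
  {t | F.map Prod.fst t = t₁ ∧ F.map Prod.snd t = t₂}

/-- The coupling-based lifting of `F` along the modality `τ`. -/
noncomputable def couplingLift (F : SetFunctor.{u}) (τ : F.obj V → V) {X : Type u}
    (d : X → X → V) (t₁ t₂ : F.obj X) : V :=
  ⨆ t ∈ couplings F t₁ t₂, τ (F.map (fun p => d p.1 p.2) t)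

/-- The codensity lifting of `F` along the set `Γ` of modalities. -/
noncomputable def codensityLift (F : SetFunctor.{u}) (Γ : Set (F.obj V → V)) {X : Type u}
    (d : X → X → V) (t₁ t₂ : F.obj X) : V :=
  ⨅ τ' ∈ Γ, ⨅ f ∈ {f : X → V | IsMor d de f}, de (τ' (F.map f t₁)) (τ' (F.map f t₂))

/-- A correspondence `⟨F, τ, Γ⟩`: the coupling-based and codensity liftings coincide. -/
def Corresp (F : SetFunctor.{u}) (τ : F.obj V → V) (Γ : Set (F.obj V → V)) : Prop :=
  ∀ {X : Type u} (d : X → X → V), IsPMet d →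
    ∀ t₁ t₂ : F.obj X, couplingLift F τ d t₁ t₂ = codensityLift F Γ d t₁ t₂

end SetFunctor

open SetFunctor AffineQuantale

section Aux

variable {V : Type u} [AffineQuantale V]

lemma aux_tensor_mono_right {x a b : V} (h : a ≤ b) : tensor x a ≤ tensor x b := by
  have hs : sSup ({a, b} : Set V) = b := by rw [sSup_pair, sup_eq_right.mpr h]
  calc tensor x a ≤ ⨆ y ∈ ({a, b} : Set V), tensor x y := le_biSup _ (by simp)
    _ = tensor x (sSup ({a, b} : Set V)) := (tensor_sSup x _).symm
    _ = tensor x b := by rw [hs]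

lemma aux_tensor_mono_left {x a b : V} (h : a ≤ b) : tensor a x ≤ tensor b x := by
  rw [tensor_comm a x, tensor_comm b x]; exact aux_tensor_mono_right h

lemma aux_tensor_iSup {ι : Sort*} (x : V) (f : ι → V) :
    tensor x (⨆ i, f i) = ⨆ i, tensor x (f i) := by
  rw [iSup, tensor_sSup, iSup_range]

lemma aux_tensor_hom_le (y z : V) : tensor (hom y z) y ≤ z := by
  rw [tensor_comm, hom, tensor_sSup]
  exact iSup_le fun w => iSup_le fun hw => by rw [tensor_comm]; exact hw

lemma aux_le_hom {x y z : V} (h : tensor x y ≤ z) : x ≤ hom y z := le_sSup h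

lemma aux_hom_le {x y z : V} (h : x ≤ hom y z) : tensor x y ≤ z :=
  le_trans (aux_tensor_mono_left h) (aux_tensor_hom_le y z)

lemma aux_tensor_left_comm (a b c : V) :
    tensor a (tensor b c) = tensor b (tensor a c) := by
  rw [← tensor_assoc, tensor_comm a b, tensor_assoc]

end Aux

/-- Extension of morphisms into the Euclidean pseudometric: any morphism
`g` defined on a subset `Y ⊆ X` extends to the least morphism `f` on `X` with `g = f ∘ i`,
given by `f x = ⋁ { g u ⊗ d x u | u ∈ Y }`. -/
theorem extension_of_morphisms {V : Type u} [AffineQuantale V] {X : Type u}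
    (d : X → X → V) (hd : IsPMet d) (Y : Set X) (g : Y → V)
    (hg : IsMor (fun u v : Y => d u v) de g) :
    letI f : X → V := fun x => ⨆ u : Y, tensor (g u) (d x u)
    IsMor d de f ∧ (∀ u : Y, f u = g u) ∧
      ∀ f' : X → V, IsMor d de f' → (∀ u : Y, f' u = g u) → ∀ x, f x ≤ f' x := by
  simp only []
  obtain ⟨hrefl, hsymm, htri⟩ := hd
  have key : ∀ x y : X, tensor (d x y) (⨆ u : Y, tensor (g u) (d x u)) ≤
      ⨆ u : Y, tensor (g u) (d y u) := by
    intro x y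
    show tensor (d x y) (⨆ u : Y, tensor (g u) (d x u)) ≤ ⨆ u : Y, tensor (g u) (d y u)
    rw [aux_tensor_iSup]
    refine iSup_le fun u => ?_
    calc tensor (d x y) (tensor (g u) (d x u))
        = tensor (g u) (tensor (d y x) (d x u)) := by
          rw [aux_tensor_left_comm, hsymm x y]
      _ ≤ tensor (g u) (d y u) := aux_tensor_mono_right (htri y u x)
      _ ≤ ⨆ u : Y, tensor (g u) (d y u) := le_iSup (fun u : Y => tensor (g u) (d y u)) u
  refine ⟨?_, ?_, ?_⟩
  · intro x y
    simp only [de]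
    refine le_inf (aux_le_hom (key x y)) (aux_le_hom ?_)
    rw [hsymm x y]
    exact key y x
  · intro u₀
    apply le_antisymm
    · refine iSup_le fun u => ?_
      have h1 : d (u : X) u₀ ≤ hom (g u) (g u₀) := by
        have := hg u u₀
        simp only [de] at this
        exact le_trans this inf_le_left
      calc tensor (g u) (d (u₀ : X) u) = tensor (d (u : X) u₀) (g u) := by
            rw [tensor_comm, hsymm]
        _ ≤ g u₀ := aux_hom_le h1
    · calc g u₀ = tensor (g u₀) (d (u₀ : X) u₀) := by rw [hrefl, tensor_top]
        _ ≤ ⨆ u : Y, tensor (g u) (d (u₀ : X) u) := le_iSup (fun u : Y => tensor (g u) (d (u₀ : X) u)) u₀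
  · intro f' hf' hfi x
    refine iSup_le fun u => ?_
    have h1 : d x u ≤ hom (f' u) (f' x) := by
      have := hf' x u
      simp only [de] at this
      exact le_trans this inf_le_right
    calc tensor (g u) (d x u) = tensor (d x u) (f' u) := by
          rw [tensor_comm, hfi u]
      _ ≤ f' x := aux_hom_le h1
end

section
/- Let V be a commutative, unital, affine quantale and (Fᵢ)ᵢ a family of weak-pullback preserving Set endofunctors. Whenever the correspondence on the left exists, the following equivalences of correspondences hold: ⟨Fᵢ, τᵢ, Γᵢ⟩ ∼ ⟨Fᵢ, [τⱼ]∘κᵢ, (⋃ⱼ Γ̄ⱼ)∘κᵢ⟩ (given correspondences ⟨Fⱼ, τⱼ, Γⱼ⟩ for all j), and ⟨∐Fᵢ, τ, Γ⟩ ∼ ⟨∐Fᵢ, [τ∘κᵢ], ⋃ᵢ (Γ∘κᵢ)‾⟩; here [−] denotes cotupling, κᵢ the i-th coprojection, Γ̄ᵢ = { τ̄ | τ ∈ Γᵢ } ∪ {τ_{⊤,i}} with τ̄(κᵢ y) = τ(y) and τ̄(x) = ⊤ otherwise and τ_{⊤,i}(κᵢ y) = ⊤ and τ_{⊤,i}(x)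 = ⊥ otherwise, and ∼ means that the associated coupling-based and codensity liftings of both correspondences all coincide. -/
universe u

open SetFunctor AffineQuantale

/-- The coproduct of a family of `Set` endofunctors. -/
def coprodF {I : Type u} (F : I → SetFunctor.{u}) : SetFunctor.{u} where
  obj X := Σ i, (F i).obj X
  map f t := ⟨t.1, (F t.1).map f t.2⟩
  map_id t := by cases t with | mk i x => exact congrArg _ ((F i).map_id x)
  map_comp f g t := by cases t with | mk i x => exact congrArg _ ((F i).map_comp f g x)

variable {V : Type u} [AffineQuantale V]

/-- The cotupling `[τᵢ]` of a family of modalities. -/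
def cotuple {I : Type u} (F : I → SetFunctor.{u}) (τ : ∀ i, (F i).obj V → V) :
    (Σ j, (F j).obj V) → V :=
  fun x => τ x.1 x.2

/-- The extension `τ̄` of a modality for `F i` to the coproduct: `τ̄(κᵢ y) = τ y`,
and `τ̄ x = ⊤` on the other components. -/
noncomputable def extendMod {I : Type u} [DecidableEq I] (F : I → SetFunctor.{u}) (i : I)
    (τ : (F i).obj V → V) : (Σ j, (F j).obj V) → V :=
  fun x => if h : x.1 = i then τ (h ▸ x.2) else ⊤

/-- The modality `τ_{⊤,i}` on the coproduct: `⊤` on the `i`-th component, `⊥` elsewhere. -/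
noncomputable def tauTopMod {I : Type u} [DecidableEq I] (F : I → SetFunctor.{u}) (i : I) :
    (Σ j, (F j).obj V) → V :=
  fun x => if x.1 = i then ⊤ else ⊥

section Aux

lemma de_self (c : V) : de c c = ⊤ := by
  have h : hom c c = ⊤ := by
    refine top_le_iff.mp (le_sSup ?_)
    simp only [Set.mem_setOf_eq]
    rw [tensor_comm, tensor_top]
  simp [de, h]

lemma de_top_bot : de (⊤ : V) ⊥ = ⊥ := by
  have h : hom (⊤ : V) ⊥ = ⊥ := by
    refine le_antisymm (sSup_le fun x hx => ?_) bot_le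
    simpa [tensor_top] using hx
  simp [de, h]

lemma isMor_const {X : Type u} (d : X → X → V) (c : V) :
    IsMor d de (fun _ => c) := by
  intro x y
  rw [de_self]
  exact le_top

lemma extendMod_self {I : Type u} [DecidableEq I] (F : I → SetFunctor.{u}) (i : I)
    (τ₀ : (F i).obj V → V) (y : (F i).obj V) :
    extendMod F i τ₀ ⟨i, y⟩ = τ₀ y := by
  simp [extendMod]

lemma extendMod_ne {I : Type u} [DecidableEq I] (F : I → SetFunctor.{u}) {i j : I}
    (h : i ≠ j) (τ₀ : (F j).obj V → V) (y : (F i).obj V) :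
    extendMod F j τ₀ ⟨i, y⟩ = ⊤ := by
  simp [extendMod, h]

end Aux

/-- Going back and forth between the components of a coproduct and the
coproduct itself yields equivalent correspondences: all the associated coupling-based
and codensity liftings coincide. -/
theorem coprod_corresp_equiv {I : Type u} [DecidableEq I] (F : I → SetFunctor.{u})
    (hwpb : ∀ i, PreservesWeakPullbacks (F i)) :
    -- ⟨Fᵢ, τᵢ, Γᵢ⟩ ∼ ⟨Fᵢ, [τⱼ]∘κᵢ, (⋃ⱼ Γ̄ⱼ)∘κᵢ⟩
    (∀ (τ : ∀ i, (F i).obj V → V) (Γ : ∀ i, Set ((F i).obj V → V)),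
      (∀ j, WellBehaved (F j) (τ j)) → (∀ j, Corresp (F j) (τ j) (Γ j)) →
      ∀ (i : I) {X : Type u} (d : X → X → V), IsPMet d → ∀ t₁ t₂ : (F i).obj X,
        couplingLift (F i) (τ i) d t₁ t₂
            = couplingLift (F i) (fun y : (F i).obj V => cotuple F τ ⟨i, y⟩) d t₁ t₂ ∧
        codensityLift (F i) (Γ i) d t₁ t₂
            = codensityLift (F i)
                ((fun τ' : (Σ j, (F j).obj V) → V => fun y : (F i).obj V => τ' ⟨i, y⟩) ''
                  (⋃ j, (extendMod F j '' Γ j ∪ {tauTopMod F j}))) d t₁ t₂ ∧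
        couplingLift (F i) (τ i) d t₁ t₂ = codensityLift (F i) (Γ i) d t₁ t₂)
    ∧
    -- ⟨∐Fᵢ, τ, Γ⟩ ∼ ⟨∐Fᵢ, [τ∘κᵢ], ⋃ᵢ (Γ∘κᵢ)‾⟩
    (∀ (τ : (Σ j, (F j).obj V) → V) (Γ : Set ((Σ j, (F j).obj V) → V)),
      WellBehaved (coprodF F) τ → Corresp (coprodF F) τ Γ →
      ∀ {X : Type u} (d : X → X → V), IsPMet d → ∀ t₁ t₂ : (Σ j, (F j).obj X),
        couplingLift (coprodF F) τ d t₁ t₂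
            = couplingLift (coprodF F)
                (cotuple F (fun i (y : (F i).obj V) => τ ⟨i, y⟩)) d t₁ t₂ ∧
        codensityLift (coprodF F) Γ d t₁ t₂
            = codensityLift (coprodF F)
                (⋃ i, (extendMod F i ''
                    ((fun τ' : (Σ j, (F j).obj V) → V => fun y : (F i).obj V => τ' ⟨i, y⟩) '' Γ)
                  ∪ {tauTopMod F i})) d t₁ t₂ ∧
        couplingLift (coprodF F) τ d t₁ t₂ = codensityLift (coprodF F) Γ d t₁ t₂) := by
  constructor
  · intro τ Γ hwb hcor i X d hd t₁ t₂
    refine ⟨rfl, ?_, hcor i d hd t₁ t₂⟩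
    have hsub : Γ i ⊆
        ((fun τ' : (Σ j, (F j).obj V) → V => fun y : (F i).obj V => τ' ⟨i, y⟩) ''
          (⋃ j, (extendMod F j '' Γ j ∪ {tauTopMod F j}))) := by
      intro τ₀ hτ₀
      refine ⟨extendMod F i τ₀, Set.mem_iUnion.mpr ⟨i, Or.inl ⟨τ₀, hτ₀, rfl⟩⟩, ?_⟩
      funext y
      exact extendMod_self F i τ₀ y
    unfold codensityLift
    apply le_antisymm
    · refine le_iInf₂ fun τ'' hτ'' => le_iInf₂ fun f hf => ?_
      obtain ⟨τb, hτb, rfl⟩ := hτ''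
      obtain ⟨j, hj⟩ := Set.mem_iUnion.mp hτb
      beta_reduce
      rcases hj with ⟨τ₀, hτ₀, rfl⟩ | hj
      · by_cases hji : j = i
        · subst hji
          rw [extendMod_self F j τ₀ ((F j).map f t₁), extendMod_self F j τ₀ ((F j).map f t₂)]
          exact iInf₂_le_of_le τ₀ hτ₀ (iInf₂_le f hf)
        · have he : ∀ y : (F i).obj V, extendMod F j τ₀ ⟨i, y⟩ = ⊤ :=
            fun y => extendMod_ne F (fun hh => hji hh.symm) τ₀ y
          simp only [he, de_self]
          exact le_top
      · rw [Set.mem_singleton_iff] at hj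
        subst hj
        by_cases hij : i = j <;> simp [tauTopMod, hij, de_self]
    · exact le_iInf₂ fun τ₀ hτ₀ => le_iInf₂ fun f hf =>
        iInf₂_le_of_le τ₀ (hsub hτ₀) (iInf₂_le f hf)
  · intro τ Γ hwb hcor X d hd t₁ t₂
    refine ⟨rfl, ?_, hcor d hd t₁ t₂⟩
    obtain ⟨i₁, s₁⟩ := t₁
    obtain ⟨i₂, s₂⟩ := t₂
    by_cases h : i₁ = i₂
    · subst h
      unfold codensityLift
      apply le_antisymm
      · refine le_iInf₂ fun τ'' hτ'' => le_iInf₂ fun f hf => ?_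
        obtain ⟨j, hj⟩ := Set.mem_iUnion.mp hτ''
        beta_reduce
        rcases hj with ⟨τr, ⟨τ', hτ', rfl⟩, rfl⟩ | hj
        · by_cases hji : j = i₁
          · subst hji
            have h1 : extendMod F j (fun y => τ' ⟨j, y⟩) ((coprodF F).map f ⟨j, s₁⟩)
                = τ' ((coprodF F).map f ⟨j, s₁⟩) :=
              extendMod_self F j (fun y => τ' ⟨j, y⟩) ((F j).map f s₁)
            have h2 : extendMod F j (fun y => τ' ⟨j, y⟩) ((coprodF F).map f ⟨j, s₂⟩)
                = τ' ((coprodF F).map f ⟨j, s₂⟩) :=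
              extendMod_self F j (fun y => τ' ⟨j, y⟩) ((F j).map f s₂)
            rw [h1, h2]
            exact iInf₂_le_of_le τ' hτ' (iInf₂_le f hf)
          · have h1 : extendMod F j (fun y => τ' ⟨j, y⟩) ((coprodF F).map f ⟨i₁, s₁⟩)
                = ⊤ := extendMod_ne F (fun hh => hji hh.symm) _ ((F i₁).map f s₁)
            have h2 : extendMod F j (fun y => τ' ⟨j, y⟩) ((coprodF F).map f ⟨i₁, s₂⟩)
                = ⊤ := extendMod_ne F (fun hh => hji hh.symm) _ ((F i₁).map f s₂)
            rw [h1, h2, de_self]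
            exact le_top
        · replace hj : τ'' = tauTopMod F j := hj
          subst hj
          have h1 : tauTopMod (V := V) F j ((coprodF F).map f ⟨i₁, s₁⟩)
              = tauTopMod (V := V) F j ((coprodF F).map f ⟨i₁, s₂⟩) := by
            by_cases hij : i₁ = j <;> simp [tauTopMod, coprodF, hij]
          rw [h1, de_self]
          exact le_top
      · refine le_iInf₂ fun τ' hτ' => le_iInf₂ fun f hf => ?_
        refine iInf₂_le_of_le (extendMod F i₁ (fun y => τ' ⟨i₁, y⟩))
          (Set.mem_iUnion.mpr ⟨i₁, Or.inl ⟨_, ⟨τ', hτ', rfl⟩, rfl⟩⟩)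
          (iInf₂_le_of_le f hf (le_of_eq ?_))
        have h1 : extendMod F i₁ (fun y => τ' ⟨i₁, y⟩) ((coprodF F).map f ⟨i₁, s₁⟩)
            = τ' ((coprodF F).map f ⟨i₁, s₁⟩) :=
          extendMod_self F i₁ (fun y => τ' ⟨i₁, y⟩) ((F i₁).map f s₁)
        have h2 : extendMod F i₁ (fun y => τ' ⟨i₁, y⟩) ((coprodF F).map f ⟨i₁, s₂⟩)
            = τ' ((coprodF F).map f ⟨i₁, s₂⟩) :=
          extendMod_self F i₁ (fun y => τ' ⟨i₁, y⟩) ((F i₁).map f s₂)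
        rw [h1, h2]
    · have hemp : couplings (coprodF F) (⟨i₁, s₁⟩ : Σ j, (F j).obj X) ⟨i₂, s₂⟩ = ∅ := by
        ext t
        simp only [couplings, Set.mem_setOf_eq, Set.mem_empty_iff_false, iff_false, not_and]
        intro h1 h2
        exact h (((congrArg Sigma.fst h1).symm.trans (congrArg Sigma.fst h2)))
      have hΓbot : codensityLift (coprodF F) Γ d ⟨i₁, s₁⟩ ⟨i₂, s₂⟩ = ⊥ := by
        rw [← hcor d hd ⟨i₁, s₁⟩ ⟨i₂, s₂⟩]
        simp [couplingLift, hemp]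
      rw [hΓbot]
      symm
      refine le_antisymm ?_ bot_le
      unfold codensityLift
      refine iInf₂_le_of_le (tauTopMod F i₁)
        (Set.mem_iUnion.mpr ⟨i₁, Or.inr rfl⟩)
        (iInf₂_le_of_le (fun _ => ⊤) (isMor_const d ⊤) ?_)
      have h2 : ¬ (i₂ = i₁) := fun he => h he.symm
      show de (tauTopMod (V := V) F i₁ ⟨i₁, (F i₁).map (fun _ => (⊤ : V)) s₁⟩)
          (tauTopMod (V := V) F i₁ ⟨i₂, (F i₂).map (fun _ => (⊤ : V)) s₂⟩) ≤ ⊥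
      simp [tauTopMod, h2, de_top_bot]
end
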